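/- Let k > 0, γ > 0, t ≥ 0, and let μ := gaussianReal 0 (γ²·(1 - exp(-k·t))/k). Then for every real S₀, ∫ (cos²(x) + S₀²·sin²(x)) dμ(x) = (1/2)·(1 + S₀²) + (1/2)·(1 - S₀²)·exp(-2·(1 - exp(-k·t))·γ²/k). -/

import Mathlib

/-! Writing `cos² x + a sin² x = (1 + a)/2 + (1 - a)/2 · cos 2x`, the mean fidelity is an affine
function of `∫ cos 2x dμ`, the real part of the characteristic function of the centred Gaussian
`μ` at `2`, which is `exp (-2v)` with `v` its variance. -/

open ProbabilityTheory MeasureTheory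

lemma integral_cos_mul_eq_re_charFun (μ : Measure ℝ) [IsFiniteMeasure μ] (t : ℝ) :
    ∫ x, Real.cos (t * x) ∂μ = (charFun μ t).re := by
  have hint : Integrable (fun x : ℝ ↦ Complex.exp (t * x * Complex.I)) μ :=
    (integrable_const (1 : ℝ)).mono' (by fun_prop)
      (ae_of_all _ fun x ↦ by simpa using (Complex.norm_exp_ofReal_mul_I (t * x)).le)
  rw [charFun_apply_real, ← RCLike.re_to_complex, ← integral_re hint]
  congr 1 with x
  simpa using (Complex.exp_ofReal_mul_I_re (t * x)).symm

lemma integral_cos_mul_gaussianReal (m : ℝ) (v : NNReal) (t : ℝ) :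
    ∫ x, Real.cos (t * x) ∂gaussianReal m v = Real.cos (t * m) * Real.exp (-(v * t ^ 2 / 2)) := by
  have h : (t * m * Complex.I - v * t ^ 2 / 2 : ℂ) =
      ((-(v * t ^ 2 / 2) : ℝ) : ℂ) + ((t * m : ℝ) : ℂ) * Complex.I := by
    push_cast; ring
  rw [integral_cos_mul_eq_re_charFun, charFun_gaussianReal, h, Complex.exp_re, mul_comm]
  simp only [Complex.add_re, Complex.add_im, Complex.ofReal_re, Complex.ofReal_im,
    Complex.re_ofReal_mul, Complex.im_ofReal_mul, Complex.I_re, Complex.I_im]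
  ring_nf

lemma cos_sq_add_mul_sin_sq (a x : ℝ) :
    Real.cos x ^ 2 + a * Real.sin x ^ 2 = (1 + a) / 2 + (1 - a) / 2 * Real.cos (2 * x) := by
  rw [Real.cos_sq, Real.sin_sq_eq_half_sub]
  ring

lemma integral_cos_sq_add_mul_sin_sq_gaussianReal (v : NNReal) (a : ℝ) :
    ∫ x, (Real.cos x ^ 2 + a * Real.sin x ^ 2) ∂gaussianReal 0 v =
      (1 + a) / 2 + (1 - a) / 2 * Real.exp (-2 * v) := by
  have hcos : Integrable (fun x ↦ Real.cos (2 * x)) (gaussianReal 0 v) :=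
    Integrable.of_bound (by fun_prop) 1 (ae_of_all _ fun x ↦ Real.abs_cos_le_one (2 * x))
  simp_rw [cos_sq_add_mul_sin_sq]
  rw [integral_add (integrable_const _) (hcos.const_mul _), integral_const, probReal_univ,
    integral_const_mul, integral_cos_mul_gaussianReal]
  simp only [smul_eq_mul, one_mul, mul_zero, Real.cos_zero]
  ring_nf

theorem pauli_fidelity_mean_OU_stationary_general (k γ t : ℝ) (hk : 0 < k)
    (ht : 0 ≤ t)
    (μ : Measure ℝ)
    (hμ : μ = gaussianReal 0 (Real.toNNReal (γ ^ 2 * (1 - Real.exp (-k * t)) / k)))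
    (S₀ : ℝ) :
    ∫ x, (Real.cos x ^ 2 + S₀ ^ 2 * Real.sin x ^ 2) ∂μ =
      (1 / 2) * (1 + S₀ ^ 2)
        + (1 / 2) * (1 - S₀ ^ 2) * Real.exp (-2 * (1 - Real.exp (-k * t)) * γ ^ 2 / k) := by
  have hdecay : Real.exp (-k * t) ≤ 1 :=
    Real.exp_le_one_iff.mpr (by nlinarith)
  have hvar : 0 ≤ γ ^ 2 * (1 - Real.exp (-k * t)) / k := by
    have : 0 ≤ 1 - Real.exp (-k * t) := by linarith
    positivity
  rw [hμ, integral_cos_sq_add_mul_sin_sq_gaussianReal, Real.coe_toNNReal _ hvar]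
  ring_nf

theorem pauli_fidelity_mean_OU_stationary (k γ t : ℝ) (hk : 0 < k) (hγ : 0 < γ)
    (ht : 0 ≤ t)
    (μ : Measure ℝ)
    (hμ : μ = gaussianReal 0 (Real.toNNReal (γ ^ 2 * (1 - Real.exp (-k * t)) / k)))
    (S₀ : ℝ) :
    ∫ x, (Real.cos x ^ 2 + S₀ ^ 2 * Real.sin x ^ 2) ∂μ =
      (1 / 2) * (1 + S₀ ^ 2)
        + (1 / 2) * (1 - S₀ ^ 2) * Real.exp (-2 * (1 - Real.exp (-k * t)) * γ ^ 2 / k) :=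
  pauli_fidelity_mean_OU_stationary_general k γ t hk ht μ hμ S₀
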